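/- Let N ≥ 1 and let ν be a Dirichlet character modulo N with values in ℂ. Then for every s ∈ ℂ with Re(s) > 1, the integral ∫_0^∞ y^{s/2−1} · (∑_{n=1}^∞ ν(n)·e^{−πn²y/N}) dy converges and equals Γ(s/2)·(π/N)^{−s/2} · ∑_{n=1}^∞ ν(n)·n^{−s}. -/

import Mathlib

/-!
Each term `ν(n) e^{-πn²y/N}` has Mellin transform `Γ(s/2) (πn²/N)^{-s/2} ν(n)` at `s/2`, and
for `Re s > 1` the integrals of the absolute values of the terms form a convergent series
(dominated by `∑ n^{-Re s}`). Hence the series may be integrated term by term, and the integral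
converges.
-/

open MeasureTheory Real Complex Set Filter

theorem integrable_tsum_of_summable_integral_norm {α E ι : Type*} [MeasurableSpace α]
    {μ : Measure α} [NormedAddCommGroup E] [CompleteSpace E] [Countable ι] {F : ι → α → E}
    (hF_int : ∀ i, Integrable (F i) μ) (hF_sum : Summable fun i ↦ ∫ a, ‖F i a‖ ∂μ) :
    Integrable (fun a ↦ ∑' i, F i a) μ := by
  have hF_enorm : ∀ i, AEMeasurable (fun a ↦ ‖F i a‖ₑ) μ := fun i ↦ (hF_int i).1.enorm
  have h_lintegral : ∫⁻ a, ∑' i, ‖F i a‖ₑ ∂μ < ⊤ := by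
    rw [lintegral_tsum hF_enorm,
      ← funext fun i ↦ ofReal_integral_norm_eq_lintegral_enorm (hF_int i),
      ← ENNReal.ofReal_tsum_of_nonneg (fun i ↦ integral_nonneg fun a ↦ norm_nonneg _) hF_sum]
    exact ENNReal.ofReal_lt_top
  have h_summable : ∀ᵐ a ∂μ, Summable fun i ↦ F i a := by
    filter_upwards [ae_lt_top' (AEMeasurable.tsum hF_enorm) h_lintegral.ne] with a ha
    exact Summable.of_norm (ENNReal.tsum_coe_ne_top_iff_summable_coe.mp ha.ne)
  refine ⟨aestronglyMeasurable_of_tendsto_ae atTop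
    (fun t ↦ Finset.aestronglyMeasurable_fun_sum t fun i _ ↦ (hF_int i).1) ?_, ?_⟩
  · filter_upwards [h_summable] with a ha using ha.hasSum
  · exact (lintegral_mono fun a ↦ enorm_tsum_le_tsum_enorm).trans_lt h_lintegral

lemma mellinConvergent_exp_neg_mul {s : ℂ} (hs : 0 < s.re) {p : ℝ} (hp : 0 < p) :
    MellinConvergent (fun t : ℝ ↦ (rexp (-p * t) : ℂ)) s := by
  have h : MellinConvergent (fun t : ℝ ↦ (rexp (-t) : ℂ)) s := by
    simpa only [MellinConvergent, smul_eq_mul, mul_comm] using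
      Complex.GammaIntegral_convergent hs
  simpa only [neg_mul] using (MellinConvergent.comp_mul_left hp).mpr h

lemma integral_norm_cpow_mul_exp_neg_mul_Ioi {s : ℂ} (hs : 0 < s.re) {p : ℝ} (hp : 0 < p) :
    ∫ t in Ioi (0 : ℝ), ‖(t : ℂ) ^ (s - 1) * rexp (-p * t)‖ =
      (1 / p) ^ s.re * Real.Gamma s.re := by
  rw [← Real.integral_rpow_mul_exp_neg_mul_Ioi hs hp]
  refine setIntegral_congr_fun measurableSet_Ioi fun t ht ↦ ?_
  rw [norm_mul, norm_real, Real.norm_of_nonneg (exp_pos _).le, norm_cpow_eq_rpow_re_of_pos ht,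
    sub_re, one_re, neg_mul]

/-- The convergence counterpart of `hasSum_mellin`. -/
lemma mellinConvergent_of_hasSum_exp_neg_mul {ι : Type*} [Countable ι] {a : ι → ℂ} {p : ι → ℝ}
    {F : ℝ → ℂ} {s : ℂ}
    (hp : ∀ i, 0 < p i) (hs : 0 < s.re)
    (hF : ∀ t ∈ Ioi 0, HasSum (fun i ↦ a i * rexp (-p i * t)) (F t))
    (h_sum : Summable fun i ↦ ‖a i‖ / p i ^ s.re) :
    MellinConvergent F s := by
  set G : ι → ℝ → ℂ := fun i t ↦ a i * ((t : ℂ) ^ (s - 1) * rexp (-p i * t))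
  have hG_int : ∀ i, IntegrableOn (G i) (Ioi 0) := fun i ↦
    (mellinConvergent_exp_neg_mul hs (hp i)).const_mul (a i)
  have hG_norm (i : ι) : ∫ t in Ioi 0, ‖G i t‖ = Real.Gamma s.re * (‖a i‖ / p i ^ s.re) := by
    simp only [G, norm_mul (a i), integral_const_mul,
      integral_norm_cpow_mul_exp_neg_mul_Ioi hs (hp i), one_div, inv_rpow (hp i).le]
    ring
  have hG_sum : Summable fun i ↦ ∫ t in Ioi 0, ‖G i t‖ := by
    simpa only [hG_norm] using h_sum.mul_left (Real.Gamma s.re)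
  refine IntegrableOn.congr_fun (integrable_tsum_of_summable_integral_norm hG_int hG_sum)
    (fun t ht ↦ ?_) measurableSet_Ioi
  simp only [G, smul_eq_mul, ← (hF t ht).tsum_eq, ← tsum_mul_left]
  exact tsum_congr fun i ↦ by ring

lemma ofReal_mul_sq_cpow_half {c x : ℝ} (hc : 0 ≤ c) (hx : 0 ≤ x) (s : ℂ) :
    ((c * x ^ 2 : ℝ) : ℂ) ^ (s / 2) = (c : ℂ) ^ (s / 2) * (x : ℂ) ^ s := by
  rw [ofReal_mul, mul_cpow_ofReal_nonneg hc (sq_nonneg x), ofReal_pow, ← cpow_nat_mul']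
  · ring_nf
  all_goals rw [arg_ofReal_of_nonneg hx]; linarith [pi_pos]

noncomputable def thetaSeries (a : ℕ → ℂ) (c t : ℝ) : ℂ :=
  ∑' n : ℕ, a n * rexp (-(c * (n + 1) ^ 2) * t)

section

variable {a : ℕ → ℂ} {C c : ℝ}

lemma summable_thetaSeries_term (ha : ∀ n, ‖a n‖ ≤ C) (hc : 0 < c) {t : ℝ} (ht : 0 < t) :
    Summable fun n : ℕ ↦ a n * rexp (-(c * (n + 1) ^ 2) * t) := by
  have h_exp : Summable fun n : ℕ ↦ rexp (-(c * t) * ((n : ℝ) + 1) ^ 2) :=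
    summable_exp_nat_mul_of_ge (by simp [hc, ht]) fun n ↦ by nlinarith
  refine (h_exp.mul_left C).of_norm_bounded fun n ↦ ?_
  rw [norm_mul, norm_real, Real.norm_of_nonneg (exp_pos _).le,
    show -(c * ((n : ℝ) + 1) ^ 2) * t = -(c * t) * ((n : ℝ) + 1) ^ 2 by ring]
  gcongr
  exact ha n

lemma summable_norm_div_mul_succ_sq_rpow (ha : ∀ n, ‖a n‖ ≤ C) (hc : 0 < c) {σ : ℝ}
    (hσ : 1 < 2 * σ) :
    Summable fun n : ℕ ↦ ‖a n‖ / (c * ((n : ℝ) + 1) ^ 2) ^ σ := by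
  have h_zeta : Summable fun n : ℕ ↦ 1 / ((n : ℝ) + 1) ^ (2 * σ) := by
    simpa using (summable_nat_add_iff 1).mpr (Real.summable_one_div_nat_rpow.mpr hσ)
  refine (h_zeta.mul_left (C / c ^ σ)).of_nonneg_of_le (fun n ↦ by positivity) fun n ↦ ?_
  rw [Real.mul_rpow hc.le (by positivity), ← Real.rpow_natCast_mul (by positivity), mul_div_assoc',
    mul_one, div_div, Nat.cast_ofNat]
  gcongr
  exact ha n

theorem mellin_thetaSeries (ha : ∀ n, ‖a n‖ ≤ C) (hc : 0 < c) {s : ℂ} (hs : 1 < s.re) :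
    MellinConvergent (thetaSeries a c) (s / 2) ∧
      mellin (thetaSeries a c) (s / 2) =
        Gamma (s / 2) * (c : ℂ) ^ (-(s / 2)) * ∑' n : ℕ, a n * ((n + 1 : ℕ) : ℂ) ^ (-s) := by
  have hp : ∀ n : ℕ, 0 < c * ((n : ℝ) + 1) ^ 2 := fun n ↦ by positivity
  have hs2 : 0 < (s / 2).re := by rw [div_ofNat_re]; linarith
  have hF : ∀ t ∈ Ioi 0, HasSum (fun n : ℕ ↦ a n * rexp (-(c * (n + 1) ^ 2) * t))
      (thetaSeries a c t) := fun t ht ↦ (summable_thetaSeries_term ha hc ht).hasSum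
  have h_sum := summable_norm_div_mul_succ_sq_rpow ha hc (σ := (s / 2).re)
    (by rw [div_ofNat_re]; linarith)
  refine ⟨mellinConvergent_of_hasSum_exp_neg_mul hp hs2 hF h_sum, ?_⟩
  rw [← (hasSum_mellin (fun n ↦ Or.inr (hp n)) hs2 hF h_sum).tsum_eq, ← tsum_mul_left]
  refine tsum_congr fun n ↦ ?_
  rw [ofReal_mul_sq_cpow_half hc.le (by positivity), cpow_neg, cpow_neg]
  push_cast
  field_simp

end

/-- The Dirichlet `L`-function as the Mellin transform of the ϑ-series (even-character
normalisation): for `Re(s) > 1`, `∫_0^∞ y^(s/2-1) ∑_{n≥1} ν(n) e^(-πn²y/N) dy` converges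
and equals `Γ(s/2)(π/N)^(-s/2) ∑_{n≥1} ν(n) n^(-s)`. -/
theorem stmt9 (N : ℕ) (hN : 1 ≤ N) (ν : DirichletCharacter ℂ N) (s : ℂ) (hs : 1 < s.re) :
    IntegrableOn (fun y : ℝ => (y : ℂ) ^ (s / 2 - 1) *
        ∑' n : ℕ, ν ((n + 1 : ℕ) : ZMod N) *
          ((Real.exp (-Real.pi * (n + 1) ^ 2 * y / N) : ℝ) : ℂ)) (Set.Ioi 0) ∧
    ∫ y in Set.Ioi (0 : ℝ), (y : ℂ) ^ (s / 2 - 1) *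
        ∑' n : ℕ, ν ((n + 1 : ℕ) : ZMod N) *
          ((Real.exp (-Real.pi * (n + 1) ^ 2 * y / N) : ℝ) : ℂ)
      = Complex.Gamma (s / 2) * ((Real.pi / N : ℝ) : ℂ) ^ (-(s / 2)) *
        ∑' n : ℕ, ν ((n + 1 : ℕ) : ZMod N) * ((n + 1 : ℕ) : ℂ) ^ (-s) := by
  have hN_pos : (0 : ℝ) < N := by exact_mod_cast hN
  have hexp : ∀ (n : ℕ) (y : ℝ),
      -π * ((n : ℝ) + 1) ^ 2 * y / N = -(π / N * ((n : ℝ) + 1) ^ 2) * y := fun n y ↦ by ring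
  obtain ⟨h_conv, h_mellin⟩ :=
    mellin_thetaSeries (a := fun n ↦ ν ((n + 1 : ℕ) : ZMod N)) (fun n ↦ ν.norm_le_one _)
      (div_pos pi_pos hN_pos) hs
  simp only [MellinConvergent, mellin, thetaSeries, smul_eq_mul, ← hexp] at h_conv h_mellin
  exact ⟨h_conv, h_mellin⟩
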